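/- Let δ ∈ (0, 1] and let Sparse be a compression operator on ℝ^N satisfying the δ-contraction property ‖x − Sparse(x)‖² ≤ (1 − δ)‖x‖² for all x. Define error memory recursively by m^(0) = 0 and m^(t+1) = m^(t) + u^(t) − Sparse(m^(t) + u^(t)), where the update vectors satisfy E[‖u^(t)‖²] ≤ U² for all t. Then for every t, E[‖m^(t+1)‖²] ≤ (4(1 − δ)/δ²) U². -/

import Mathlib

/-!
Since `(1 - δ) (p + q)² ≤ (1 - δ/2) p² + (2(1 - δ)/δ) q²`, one step of error feedback contracts
the memory: `‖m^(t+1)‖² ≤ (1 - δ/2) ‖m^(t)‖² + (2(1 - δ)/δ) ‖u^(t)‖²`. The memory need not be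
measurable, so instead of integrating this recursion directly we dominate `‖m^(t)‖²` by the
integrable solution `G` of `G_{t+1} = (1 - δ/2) G_t + (2(1 - δ)/δ) ‖u^(t)‖²`, `G_0 = 0`, whose
expectation stays below the fixed point `B = 4(1 - δ) U² / δ²` of `B ↦ (1 - δ/2) B + (2(1 - δ)/δ) U²`.
-/

open MeasureTheory

lemma one_sub_mul_add_sq_le {δ : ℝ} (hδ0 : 0 < δ) (hδ1 : δ ≤ 1) (p q : ℝ) :
    (1 - δ) * (p + q) ^ 2 ≤ (1 - δ / 2) * p ^ 2 + 2 * (1 - δ) / δ * q ^ 2 := by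
  rw [← mul_le_mul_iff_of_pos_left hδ0]
  have hq : 2 * (1 - δ) / δ * q ^ 2 * δ = 2 * (1 - δ) * q ^ 2 := by field_simp
  -- the difference is `(δ p - 2(1 - δ) q)² / 2 + δ (1 - δ) q²`
  nlinarith [sq_nonneg (δ * p - 2 * (1 - δ) * q), mul_nonneg (mul_nonneg hδ0.le
    (sub_nonneg.2 hδ1)) (sq_nonneg q)]

lemma norm_add_sub_sq_le_of_contraction {E : Type*} [SeminormedAddCommGroup E] {δ : ℝ}
    (hδ0 : 0 < δ) (hδ1 : δ ≤ 1) {S : E → E} (hS : ∀ x, ‖x - S x‖ ^ 2 ≤ (1 - δ) * ‖x‖ ^ 2)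
    (a b : E) :
    ‖a + b - S (a + b)‖ ^ 2 ≤ (1 - δ / 2) * ‖a‖ ^ 2 + 2 * (1 - δ) / δ * ‖b‖ ^ 2 :=
  calc ‖a + b - S (a + b)‖ ^ 2 ≤ (1 - δ) * ‖a + b‖ ^ 2 := hS _
    _ ≤ (1 - δ) * (‖a‖ + ‖b‖) ^ 2 := by
      have := sub_nonneg.2 hδ1
      gcongr
      exact norm_add_le a b
    _ ≤ _ := one_sub_mul_add_sq_le hδ0 hδ1 _ _

section AffineRecursion

variable {Ω : Type*} [MeasurableSpace Ω] {μ : Measure Ω} {X Y : ℕ → Ω → ℝ} {r B : ℝ}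

lemma exists_integrable_ge_of_le_mul_add (hr : 0 ≤ r) (hB : 0 ≤ B) (hX0 : ∀ ω, X 0 ω ≤ 0)
    (hX : ∀ t ω, X (t + 1) ω ≤ r * X t ω + Y t ω) (hY : ∀ t, Integrable (Y t) μ)
    (hYB : ∀ t, ∫ ω, Y t ω ∂μ ≤ (1 - r) * B) (t : ℕ) :
    ∃ G : Ω → ℝ, Integrable G μ ∧ (∀ ω, X t ω ≤ G ω) ∧ ∫ ω, G ω ∂μ ≤ B := by
  induction t with
  | zero => exact ⟨0, integrable_zero _ _ _, hX0, by simpa using hB⟩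
  | succ t ih =>
    obtain ⟨G, hG_int, hXG, hGB⟩ := ih
    refine ⟨fun ω => r * G ω + Y t ω, (hG_int.const_mul r).add (hY t), fun ω => ?_, ?_⟩
    · exact (hX t ω).trans (add_le_add_left (mul_le_mul_of_nonneg_left (hXG ω) hr) _)
    · rw [integral_add (hG_int.const_mul r) (hY t), integral_const_mul]
      nlinarith [hYB t]

lemma integral_le_of_le_mul_add (hr : 0 ≤ r) (hB : 0 ≤ B) (hXnn : ∀ t ω, 0 ≤ X t ω)
    (hX0 : ∀ ω, X 0 ω ≤ 0) (hX : ∀ t ω, X (t + 1) ω ≤ r * X t ω + Y t ω)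
    (hY : ∀ t, Integrable (Y t) μ) (hYB : ∀ t, ∫ ω, Y t ω ∂μ ≤ (1 - r) * B) (t : ℕ) :
    ∫ ω, X t ω ∂μ ≤ B := by
  obtain ⟨G, hG_int, hXG, hGB⟩ := exists_integrable_ge_of_le_mul_add hr hB hX0 hX hY hYB t
  exact (integral_mono_of_nonneg (.of_forall (hXnn t)) hG_int (.of_forall hXG)).trans hGB

end AffineRecursion

theorem stmt_6_general {N : ℕ} {Ω : Type*} [MeasurableSpace Ω]
    (μ : Measure Ω)
    (δ : ℝ) (hδ0 : 0 < δ) (hδ1 : δ ≤ 1)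
    (Sparse : EuclideanSpace ℝ (Fin N) → EuclideanSpace ℝ (Fin N))
    (hc : ∀ x, ‖x - Sparse x‖ ^ 2 ≤ (1 - δ) * ‖x‖ ^ 2)
    (m u : ℕ → Ω → EuclideanSpace ℝ (Fin N)) (U : ℝ)
    (h0 : ∀ ω, m 0 ω = 0)
    (hrec : ∀ t ω, m (t + 1) ω = m t ω + u t ω - Sparse (m t ω + u t ω))
    (hint : ∀ t, Integrable (fun ω => ‖u t ω‖ ^ 2) μ)
    (hu : ∀ t, ∫ ω, ‖u t ω‖ ^ 2 ∂μ ≤ U ^ 2) :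
    ∀ t, ∫ ω, ‖m (t + 1) ω‖ ^ 2 ∂μ ≤ (4 * (1 - δ) / δ ^ 2) * U ^ 2 := by
  intro t
  have hc0 : 0 ≤ 2 * (1 - δ) / δ := div_nonneg (by linarith) hδ0.le
  refine integral_le_of_le_mul_add (X := fun t ω => ‖m t ω‖ ^ 2)
    (Y := fun t ω => 2 * (1 - δ) / δ * ‖u t ω‖ ^ 2) (by linarith)
    (by have := sub_nonneg.2 hδ1; positivity) (fun _ _ => sq_nonneg _) (fun ω => by simp [h0])
    (fun t ω => hrec t ω ▸ norm_add_sub_sq_le_of_contraction hδ0 hδ1 hc _ _)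
    (fun t => (hint t).const_mul _) (fun t => ?_) (t + 1)
  calc ∫ ω, 2 * (1 - δ) / δ * ‖u t ω‖ ^ 2 ∂μ ≤ 2 * (1 - δ) / δ * U ^ 2 := by
        rw [integral_const_mul]; exact mul_le_mul_of_nonneg_left (hu t) hc0
    _ = (1 - (1 - δ / 2)) * (4 * (1 - δ) / δ ^ 2 * U ^ 2) := by field_simp; ring

/-- Error-feedback memory bound (Lemma 2): with a `δ`-contractive sparsifier and
updates of second moment at most `U²`, `E[‖m^(t+1)‖²] ≤ (4(1−δ)/δ²) U²`. -/
theorem stmt_6 {N : ℕ} {Ω : Type*} [MeasurableSpace Ω]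
    (μ : Measure Ω) [IsProbabilityMeasure μ]
    (δ : ℝ) (hδ0 : 0 < δ) (hδ1 : δ ≤ 1)
    (Sparse : EuclideanSpace ℝ (Fin N) → EuclideanSpace ℝ (Fin N))
    (hc : ∀ x, ‖x - Sparse x‖ ^ 2 ≤ (1 - δ) * ‖x‖ ^ 2)
    (m u : ℕ → Ω → EuclideanSpace ℝ (Fin N)) (U : ℝ)
    (h0 : ∀ ω, m 0 ω = 0)
    (hrec : ∀ t ω, m (t + 1) ω = m t ω + u t ω - Sparse (m t ω + u t ω))
    (hint : ∀ t, Integrable (fun ω => ‖u t ω‖ ^ 2) μ)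
    (hu : ∀ t, ∫ ω, ‖u t ω‖ ^ 2 ∂μ ≤ U ^ 2) :
    ∀ t, ∫ ω, ‖m (t + 1) ω‖ ^ 2 ∂μ ≤ (4 * (1 - δ) / δ ^ 2) * U ^ 2 :=
  stmt_6_general μ δ hδ0 hδ1 Sparse hc m u U h0 hrec hint hu
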